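/- arXiv:1711.10477 — 2 statements merged into one kernel-verified Lean document; each statement's English description precedes it below -/
import Mathlib

section
/- Let Ω ⊆ ℝ^N be an open set, N ≥ 3, and 0 < s₂ ≤ 2. For any s₁ ∈ [0, s₂] set ς(s₁,s₂) = (N−s₁)(2−s₂)/((N−s₂)(2−s₁)). Then for every σ ∈ [0, ς(s₁,s₂)] there exists C(σ) > 0 such that |u|_{2*(s₂),s₂} ≤ C(σ) ‖u‖^{1−σ} |u|_{2*(s₁),s₁}^{σ} for all u ∈ D₀^{1,2}(Ω). -/
open MeasureTheory Real Set

lemma holder_rpow_aux {α : Type*} [MeasurableSpace α] {μ : Measure α} {f g : α → ℝ}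
    (hf0 : ∀ x, 0 ≤ f x) (hg0 : ∀ x, 0 ≤ g x)
    (hf : Integrable f μ) (hg : Integrable g μ) {t : ℝ} (ht0 : 0 < t) (ht1 : t < 1) :
    ∫ x, f x ^ (1 - t) * g x ^ t ∂μ
      ≤ (∫ x, f x ∂μ) ^ (1 - t) * (∫ x, g x ∂μ) ^ t := by
  have h1t : (0:ℝ) < 1 - t := by linarith
  have hpq : Real.HolderConjugate (1 / (1 - t)) (1 / t) :=
    Real.holderConjugate_one_div h1t ht0 (by ring)
  have hmem : ∀ (h : α → ℝ), (∀ x, 0 ≤ h x) → Integrable h μ → ∀ r : ℝ, 0 < r →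
      MemLp (fun x => h x ^ r) (ENNReal.ofReal (1 / r)) μ := by
    intro h h0 hint r hr
    have := (memLp_one_iff_integrable.mpr hint).norm_rpow_div (ENNReal.ofReal r)
    have e1 : (fun x => ‖h x‖ ^ (ENNReal.ofReal r).toReal) = fun x => h x ^ r := by
      funext x
      rw [ENNReal.toReal_ofReal hr.le, Real.norm_of_nonneg (h0 x)]
    have e2 : (1 : ENNReal) / ENNReal.ofReal r = ENNReal.ofReal (1 / r) := by
      rw [one_div, one_div, ← ENNReal.ofReal_inv_of_pos hr]
    rwa [e1, e2] at this
  have H := integral_mul_le_Lp_mul_Lq_of_nonneg hpq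
    (ae_of_all μ fun x => Real.rpow_nonneg (hf0 x) (1 - t))
    (ae_of_all μ fun x => Real.rpow_nonneg (hg0 x) t)
    (hmem f hf0 hf (1 - t) h1t) (hmem g hg0 hg t ht0)
  have ef : ∀ x, (f x ^ (1 - t)) ^ (1 / (1 - t)) = f x := fun x => by
    rw [← Real.rpow_mul (hf0 x), mul_one_div_cancel h1t.ne', Real.rpow_one]
  have eg : ∀ x, (g x ^ t) ^ (1 / t) = g x := fun x => by
    rw [← Real.rpow_mul (hg0 x), mul_one_div_cancel ht0.ne', Real.rpow_one]
  simp_rw [ef, eg, one_div_one_div] at H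
  exact H

set_option maxHeartbeats 1000000 in
/-- CKN-type interpolation: for `0 < s₂ ≤ 2`, `s₁ ∈ [0,s₂]` and
`σ ∈ [0, ς(s₁,s₂)]` with `ς(s₁,s₂) = (N−s₁)(2−s₂)/((N−s₂)(2−s₁))`, there is
`C(σ) > 0` with `|u|_{2*(s₂),s₂} ≤ C(σ) ‖u‖^{1−σ} |u|_{2*(s₁),s₁}^σ`
for all `u ∈ D₀^{1,2}(Ω)` (the Hardy–Sobolev inequality is assumed). -/
theorem stmt9 (N : ℕ) (hN : 3 ≤ N)
    (Ω : Set (EuclideanSpace ℝ (Fin N))) (hΩ : IsOpen Ω)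
    (D : (EuclideanSpace ℝ (Fin N) → ℝ) → Prop)
    (nrm : ℝ → (EuclideanSpace ℝ (Fin N) → ℝ) → ℝ)
    (hnrm : ∀ s u, nrm s u =
      (∫ x in Ω, |u x| ^ (2 * ((N : ℝ) - s) / ((N : ℝ) - 2)) / ‖x‖ ^ s) ^
        (((N : ℝ) - 2) / (2 * ((N : ℝ) - s))))
    (dnorm : (EuclideanSpace ℝ (Fin N) → ℝ) → ℝ)
    (hdnorm : ∀ u, dnorm u = (∫ x in Ω, ‖fderiv ℝ u x‖ ^ 2) ^ ((1 : ℝ) / 2))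
    (hD : ∀ u, D u → ∀ s ∈ Set.Icc (0 : ℝ) 2,
      IntegrableOn (fun x => |u x| ^ (2 * ((N : ℝ) - s) / ((N : ℝ) - 2)) / ‖x‖ ^ s) Ω)
    (hHS : ∀ s ∈ Set.Icc (0 : ℝ) 2, ∃ μs > 0, ∀ u, D u → μs * nrm s u ^ 2 ≤ dnorm u ^ 2)
    (s₁ s₂ : ℝ) (hs₂ : 0 < s₂) (hs₂2 : s₂ ≤ 2) (hs₁ : s₁ ∈ Set.Icc 0 s₂)
    (σ : ℝ)
    (hσ : σ ∈ Set.Icc (0 : ℝ)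
      (((N : ℝ) - s₁) * (2 - s₂) / (((N : ℝ) - s₂) * (2 - s₁)))) :
    ∃ C > 0, ∀ u, D u → nrm s₂ u ≤ C * dnorm u ^ (1 - σ) * nrm s₁ u ^ σ := by
  obtain ⟨hσ0, hσς⟩ := hσ
  obtain ⟨hs₁0, hs₁2⟩ := hs₁
  have hN2 : (2:ℝ) < (N:ℝ) := by
    have : (3:ℝ) ≤ (N:ℝ) := by exact_mod_cast hN
    linarith
  have hnrm_nn : ∀ s u, 0 ≤ nrm s u := fun s u => by
    rw [hnrm]
    apply Real.rpow_nonneg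
    apply integral_nonneg
    intro x
    positivity
  have hdn_nn : ∀ u, 0 ≤ dnorm u := fun u => by
    rw [hdnorm]; positivity
  have key : ∀ s ∈ Set.Icc (0:ℝ) 2, ∃ c > 0, ∀ u, D u → nrm s u ≤ c * dnorm u := by
    intro s hs
    obtain ⟨μs, hμs, h⟩ := hHS s hs
    have hsq : 0 < Real.sqrt μs := Real.sqrt_pos.mpr hμs
    refine ⟨(Real.sqrt μs)⁻¹, inv_pos.mpr hsq, fun u hu => ?_⟩
    have h3 : (Real.sqrt μs * nrm s u) ^ 2 ≤ (dnorm u) ^ 2 := by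
      rw [mul_pow, Real.sq_sqrt hμs.le]; exact h u hu
    have h4 : Real.sqrt μs * nrm s u ≤ dnorm u := by
      have a0 : 0 ≤ Real.sqrt μs * nrm s u := mul_nonneg (Real.sqrt_nonneg _) (hnrm_nn s u)
      have := Real.sqrt_le_sqrt h3
      rwa [Real.sqrt_sq a0, Real.sqrt_sq (hdn_nn u)] at this
    calc nrm s u = (Real.sqrt μs)⁻¹ * (Real.sqrt μs * nrm s u) := by
          field_simp
      _ ≤ (Real.sqrt μs)⁻¹ * dnorm u := by
          exact mul_le_mul_of_nonneg_left h4 (by positivity)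
  rcases eq_or_lt_of_le hσ0 with hσ0' | hσpos
  · obtain ⟨c, hc, hcu⟩ := key s₂ ⟨hs₂.le, hs₂2⟩
    refine ⟨c, hc, fun u hu => ?_⟩
    rw [← hσ0', sub_zero, Real.rpow_one, Real.rpow_zero, mul_one]
    exact hcu u hu
  have hs₁2' : s₁ < 2 := by
    rcases eq_or_lt_of_le (hs₁2.trans hs₂2) with h | h
    · exfalso
      have h2 : (2:ℝ) - s₁ = 0 := by linarith
      rw [h2, mul_zero, div_zero] at hσς
      linarith
    · exact h
  have hNs₁ : (0:ℝ) < (N:ℝ) - s₁ := by linarith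
  have hNs₂ : (0:ℝ) < (N:ℝ) - s₂ := by linarith
  have hcross : σ * (((N:ℝ) - s₂) * (2 - s₁)) ≤ ((N:ℝ) - s₁) * (2 - s₂) := by
    rw [← le_div_iff₀ (mul_pos hNs₂ (by linarith : (0:ℝ) < 2 - s₁))]
    exact hσς
  have hσ1 : σ ≤ 1 := by
    nlinarith [hcross, mul_nonneg (sub_nonneg.2 hs₁2) (by linarith : (0:ℝ) ≤ (N:ℝ) - 2),
      mul_pos hNs₂ (show (0:ℝ) < 2 - s₁ by linarith)]
  rcases eq_or_lt_of_le hσ1 with hσ1' | hσlt1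
  · -- σ = 1 : then s₁ = s₂
    rw [hσ1', one_mul] at hcross
    have hs12 : s₁ = s₂ := by
      refine le_antisymm hs₁2 ?_
      nlinarith [hcross, hN2]
    refine ⟨1, one_pos, fun u hu => ?_⟩
    rw [hσ1', sub_self, Real.rpow_zero, Real.rpow_one, hs12, one_mul, one_mul]
  -- main case : 0 < σ < 1
  set t : ℝ := σ * ((N:ℝ) - s₂) / ((N:ℝ) - s₁) with ht_def
  have ht0 : 0 < t := div_pos (mul_pos hσpos hNs₂) hNs₁
  have ht2 : t * (2 - s₁) ≤ 2 - s₂ := by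
    rw [ht_def, div_mul_eq_mul_div, div_le_iff₀ hNs₁]
    nlinarith
  have ht1 : t < 1 := by
    rcases eq_or_lt_of_le hs₁2 with h12 | h12
    · have : t = σ := by rw [ht_def, h12]; field_simp
      linarith
    · nlinarith
  have h1t : (0:ℝ) < 1 - t := by linarith
  set sb : ℝ := (s₂ - t * s₁) / (1 - t) with hsb_def
  have hNe2 : ((N:ℝ) - 2) ≠ 0 := by linarith
  have hconv : (1 - t) * sb + t * s₁ = s₂ := by
    rw [hsb_def]; field_simp; ring
  have hsb2 : sb ≤ 2 := by
    rw [hsb_def, div_le_iff₀ h1t]; linarith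
  have hsbs₂ : s₂ ≤ sb := by
    rw [hsb_def, le_div_iff₀ h1t]; nlinarith
  have hsb0 : (0:ℝ) ≤ sb := le_trans hs₂.le hsbs₂
  have hNsb : (0:ℝ) < (N:ℝ) - sb := by linarith
  -- exponents
  have hσt : σ * (2 * ((N:ℝ) - s₂) / ((N:ℝ) - 2)) = t * (2 * ((N:ℝ) - s₁) / ((N:ℝ) - 2)) := by
    rw [ht_def]; field_simp [hNs₁.ne', hNe2]
  have hPconv : (1 - t) * (2 * ((N:ℝ) - sb) / ((N:ℝ) - 2)) + t * (2 * ((N:ℝ) - s₁) / ((N:ℝ) - 2))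
      = 2 * ((N:ℝ) - s₂) / ((N:ℝ) - 2) := by
    linear_combination (-(2:ℝ) / ((N:ℝ) - 2)) * hconv
  obtain ⟨c, hc, hcu⟩ := key sb ⟨hsb0, hsb2⟩
  refine ⟨c ^ (1 - σ), Real.rpow_pos_of_pos hc _, fun u hu => ?_⟩
  -- pointwise identity
  have hpt : ∀ x : EuclideanSpace ℝ (Fin N),
      |u x| ^ (2 * ((N:ℝ) - s₂) / ((N:ℝ) - 2)) / ‖x‖ ^ s₂
      = (|u x| ^ (2 * ((N:ℝ) - sb) / ((N:ℝ) - 2)) / ‖x‖ ^ sb) ^ (1 - t)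
        * (|u x| ^ (2 * ((N:ℝ) - s₁) / ((N:ℝ) - 2)) / ‖x‖ ^ s₁) ^ t := by
    intro x
    have ha : (0:ℝ) ≤ |u x| := abs_nonneg _
    have hb : (0:ℝ) ≤ ‖x‖ := norm_nonneg _
    rw [Real.div_rpow (Real.rpow_nonneg ha _) (Real.rpow_nonneg hb _),
        Real.div_rpow (Real.rpow_nonneg ha _) (Real.rpow_nonneg hb _),
        div_mul_div_comm, ← Real.rpow_mul ha, ← Real.rpow_mul ha,
        ← Real.rpow_mul hb, ← Real.rpow_mul hb,
        ← Real.rpow_add_of_nonneg ha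
          (mul_nonneg (by apply div_nonneg <;> linarith) (by linarith))
          (mul_nonneg (by apply div_nonneg <;> linarith) ht0.le),
        ← Real.rpow_add_of_nonneg hb
          (mul_nonneg hsb0 (by linarith)) (mul_nonneg hs₁0 ht0.le)]
    congr 1
    · congr 1
      linarith [hPconv]
    · congr 1
      linarith [hconv]
  -- Hölder
  have hIb := hD u hu sb ⟨hsb0, hsb2⟩
  have hI1 := hD u hu s₁ ⟨hs₁0, by linarith⟩
  have hHolder : (∫ x in Ω, |u x| ^ (2 * ((N:ℝ) - s₂) / ((N:ℝ) - 2)) / ‖x‖ ^ s₂)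
      ≤ (∫ x in Ω, |u x| ^ (2 * ((N:ℝ) - sb) / ((N:ℝ) - 2)) / ‖x‖ ^ sb) ^ (1 - t)
        * (∫ x in Ω, |u x| ^ (2 * ((N:ℝ) - s₁) / ((N:ℝ) - 2)) / ‖x‖ ^ s₁) ^ t := by
    rw [integral_congr_ae (ae_of_all _ hpt)]
    exact holder_rpow_aux
      (fun x => div_nonneg (Real.rpow_nonneg (abs_nonneg _) _) (Real.rpow_nonneg (norm_nonneg _) _))
      (fun x => div_nonneg (Real.rpow_nonneg (abs_nonneg _) _) (Real.rpow_nonneg (norm_nonneg _) _))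
      hIb hI1 ht0 ht1
  set A : ℝ := ∫ x in Ω, |u x| ^ (2 * ((N:ℝ) - sb) / ((N:ℝ) - 2)) / ‖x‖ ^ sb with hA_def
  set B : ℝ := ∫ x in Ω, |u x| ^ (2 * ((N:ℝ) - s₁) / ((N:ℝ) - 2)) / ‖x‖ ^ s₁ with hB_def
  have hA0 : 0 ≤ A := integral_nonneg fun x =>
    div_nonneg (Real.rpow_nonneg (abs_nonneg _) _) (Real.rpow_nonneg (norm_nonneg _) _)
  have hB0 : 0 ≤ B := integral_nonneg fun x =>
    div_nonneg (Real.rpow_nonneg (abs_nonneg _) _) (Real.rpow_nonneg (norm_nonneg _) _)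
  have he₂0 : (0:ℝ) ≤ ((N:ℝ) - 2) / (2 * ((N:ℝ) - s₂)) := by
    apply div_nonneg <;> linarith
  have step1 : nrm s₂ u ≤ (A ^ (1 - t) * B ^ t) ^ (((N:ℝ) - 2) / (2 * ((N:ℝ) - s₂))) := by
    rw [hnrm]
    exact Real.rpow_le_rpow (integral_nonneg fun x =>
      div_nonneg (Real.rpow_nonneg (abs_nonneg _) _) (Real.rpow_nonneg (norm_nonneg _) _))
      hHolder he₂0
  have step2 : (A ^ (1 - t) * B ^ t) ^ (((N:ℝ) - 2) / (2 * ((N:ℝ) - s₂)))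
      = A ^ ((1 - t) * (((N:ℝ) - 2) / (2 * ((N:ℝ) - s₂))))
        * B ^ (t * (((N:ℝ) - 2) / (2 * ((N:ℝ) - s₂)))) := by
    rw [Real.mul_rpow (Real.rpow_nonneg hA0 _) (Real.rpow_nonneg hB0 _),
        Real.rpow_mul hA0, Real.rpow_mul hB0]
  -- exponent identities
  have hexp1 : (((N:ℝ) - 2) / (2 * ((N:ℝ) - sb))) * (1 - σ)
      = (1 - t) * (((N:ℝ) - 2) / (2 * ((N:ℝ) - s₂))) := by
    have hq : (1 - σ) * (2 * ((N:ℝ) - s₂) / ((N:ℝ) - 2))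
        = (1 - t) * (2 * ((N:ℝ) - sb) / ((N:ℝ) - 2)) := by
      linarith [hPconv, hσt]
    have hq' : (1 - σ) * (2 * ((N:ℝ) - s₂)) = (1 - t) * (2 * ((N:ℝ) - sb)) := by
      have h := congrArg (fun z : ℝ => z * ((N:ℝ) - 2)) hq
      simp only [mul_assoc] at h
      rwa [div_mul_cancel₀ _ hNe2, div_mul_cancel₀ _ hNe2] at h
    rw [div_mul_eq_mul_div, mul_div_assoc',
      div_eq_div_iff (by linarith : (0:ℝ) < 2 * ((N:ℝ) - sb)).ne'
        (by linarith : (0:ℝ) < 2 * ((N:ℝ) - s₂)).ne']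
    linear_combination ((N:ℝ) - 2) * hq'
  have hexp2 : (((N:ℝ) - 2) / (2 * ((N:ℝ) - s₁))) * σ
      = t * (((N:ℝ) - 2) / (2 * ((N:ℝ) - s₂))) := by
    rw [ht_def]
    field_simp [hNs₁.ne', hNs₂.ne', hNe2]
  have step3 : A ^ ((1 - t) * (((N:ℝ) - 2) / (2 * ((N:ℝ) - s₂)))) = (nrm sb u) ^ (1 - σ) := by
    rw [hnrm, ← hA_def, ← Real.rpow_mul hA0, hexp1]
  have step4 : B ^ (t * (((N:ℝ) - 2) / (2 * ((N:ℝ) - s₂)))) = (nrm s₁ u) ^ σ := by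
    rw [hnrm, ← hB_def, ← Real.rpow_mul hB0, hexp2]
  have step5 : (nrm sb u) ^ (1 - σ) ≤ (c * dnorm u) ^ (1 - σ) :=
    Real.rpow_le_rpow (hnrm_nn sb u) (hcu u hu) (by linarith)
  calc nrm s₂ u ≤ (A ^ (1 - t) * B ^ t) ^ (((N:ℝ) - 2) / (2 * ((N:ℝ) - s₂))) := step1
    _ = (nrm sb u) ^ (1 - σ) * (nrm s₁ u) ^ σ := by rw [step2, step3, step4]
    _ ≤ (c * dnorm u) ^ (1 - σ) * (nrm s₁ u) ^ σ :=
        mul_le_mul_of_nonneg_right step5 (Real.rpow_nonneg (hnrm_nn s₁ u) σ)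
    _ = c ^ (1 - σ) * dnorm u ^ (1 - σ) * nrm s₁ u ^ σ := by
        rw [Real.mul_rpow hc.le (hdn_nn u)]
end

section
/- Let N ≥ 3, s ∈ (0,2), α > 1, β > 1, α + β = 2*(s), λ, μ > 0 and κ > −(λ/α)^{α/2*(s)} (μ/β)^{β/2*(s)}. Then there exists a constant C > 0 such that for all (u,v) ∈ D₀^{1,2}(Ω) × D₀^{1,2}(Ω): ∫_Ω (λ|u|^{2*(s)} + μ|v|^{2*(s)} + 2*(s)κ|u|^α|v|^β)/|x|^s dx ≥ C ∫_Ω (λ|u|^{2*(s)} + μ|v|^{2*(s)})/|x|^s dx. In particular, the set D̃ of admissible pairs for S_{α,β,λ,μ}(Ω) equals all of D \ {(0,0)}. -/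
open MeasureTheory Real Set

lemma div_le_div_nn {a b d : ℝ} (h : a ≤ b) (hd : 0 ≤ d) : a / d ≤ b / d := by
  rw [div_eq_mul_inv, div_eq_mul_inv]
  exact mul_le_mul_of_nonneg_right h (inv_nonneg.mpr hd)

/-- Sharp weighted Young inequality. -/
lemma young_aux (q α β lam mu : ℝ) (hα : 0 < α) (hβ : 0 < β) (hαβ : α + β = q)
    (hlam : 0 < lam) (hmu : 0 < mu) (a b : ℝ) (ha : 0 ≤ a) (hb : 0 ≤ b) :
    q * ((lam / α) ^ (α / q) * (mu / β) ^ (β / q)) * a ^ α * b ^ β ≤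
      lam * a ^ q + mu * b ^ q := by
  have hq : 0 < q := by linarith
  have h1 : (0:ℝ) ≤ lam / α := le_of_lt (div_pos hlam hα)
  have h2 : (0:ℝ) ≤ mu / β := le_of_lt (div_pos hmu hβ)
  have key := Real.geom_mean_le_arith_mean2_weighted
    (le_of_lt (div_pos hα hq)) (le_of_lt (div_pos hβ hq))
    (mul_nonneg h1 (Real.rpow_nonneg ha q)) (mul_nonneg h2 (Real.rpow_nonneg hb q))
    (by rw [← add_div, hαβ, div_self hq.ne'])
  have e1 : (lam / α * a ^ q) ^ (α / q) = (lam / α) ^ (α / q) * a ^ α := by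
    rw [Real.mul_rpow h1 (Real.rpow_nonneg ha q), ← Real.rpow_mul ha]
    congr 1
    field_simp
  have e2 : (mu / β * b ^ q) ^ (β / q) = (mu / β) ^ (β / q) * b ^ β := by
    rw [Real.mul_rpow h2 (Real.rpow_nonneg hb q), ← Real.rpow_mul hb]
    congr 1
    field_simp
  rw [e1, e2] at key
  have hα' : α ≠ 0 := ne_of_gt hα
  have hβ' : β ≠ 0 := ne_of_gt hβ
  have := mul_le_mul_of_nonneg_left key (le_of_lt hq)
  calc q * ((lam / α) ^ (α / q) * (mu / β) ^ (β / q)) * a ^ α * b ^ β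
      = q * ((lam / α) ^ (α / q) * a ^ α * ((mu / β) ^ (β / q) * b ^ β)) := by ring
    _ ≤ q * (α / q * (lam / α * a ^ q) + β / q * (mu / β * b ^ q)) := this
    _ = lam * a ^ q + mu * b ^ q := by field_simp

/-- If `κ > −(λ/α)^{α/2*(s)}(μ/β)^{β/2*(s)}` then the full nonlinear term dominates
a positive multiple of the diagonal term; in particular any pair with a nonzero
diagonal term is admissible (`D̃ = D \ {(0,0)}`). -/
theorem stmt12 (N : ℕ) (hN : 3 ≤ N)
    (Ω : Set (EuclideanSpace ℝ (Fin N))) (hΩ : IsOpen Ω)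
    (s : ℝ) (hs : s ∈ Set.Ioo (0 : ℝ) 2)
    (q : ℝ) (hq : q = 2 * ((N : ℝ) - s) / ((N : ℝ) - 2))
    (α β lam mu κ : ℝ) (hα : 1 < α) (hβ : 1 < β) (hαβ : α + β = q)
    (hlam : 0 < lam) (hmu : 0 < mu)
    (hκ : -((lam / α) ^ (α / q) * (mu / β) ^ (β / q)) < κ) :
    ∃ C > 0, ∀ u v : EuclideanSpace ℝ (Fin N) → ℝ,
      AEMeasurable u (volume.restrict Ω) → AEMeasurable v (volume.restrict Ω) →
      IntegrableOn (fun x => |u x| ^ q / ‖x‖ ^ s) Ω →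
      IntegrableOn (fun x => |v x| ^ q / ‖x‖ ^ s) Ω →
      (C * ∫ x in Ω, (lam * |u x| ^ q + mu * |v x| ^ q) / ‖x‖ ^ s) ≤
        (∫ x in Ω, (lam * |u x| ^ q + mu * |v x| ^ q +
          q * κ * |u x| ^ α * |v x| ^ β) / ‖x‖ ^ s) ∧
      ((0 < ∫ x in Ω, (lam * |u x| ^ q + mu * |v x| ^ q) / ‖x‖ ^ s) →
        0 < ∫ x in Ω, (lam * |u x| ^ q + mu * |v x| ^ q +
          q * κ * |u x| ^ α * |v x| ^ β) / ‖x‖ ^ s) := by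
  have hα0 : 0 < α := by linarith
  have hβ0 : 0 < β := by linarith
  have hq0 : 0 < q := by linarith
  set κ₀ : ℝ := (lam / α) ^ (α / q) * (mu / β) ^ (β / q) with hκ₀def
  have hκ₀ : 0 < κ₀ :=
    mul_pos (Real.rpow_pos_of_pos (div_pos hlam hα0) _)
      (Real.rpow_pos_of_pos (div_pos hmu hβ0) _)
  set m : ℝ := min κ 0 with hm
  have hmκ : m ≤ κ := min_le_left _ _
  have hm0 : m ≤ 0 := min_le_right _ _
  have hmgt : -κ₀ < m := lt_min hκ (neg_lt_zero.mpr hκ₀)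
  set C : ℝ := 1 + m / κ₀ with hC
  have hCpos : 0 < C := by
    have : -1 < m / κ₀ := by
      rw [lt_div_iff₀ hκ₀]; linarith
    simp only [hC]; linarith
  have hC1 : C ≤ 1 := by
    have : m / κ₀ ≤ 0 := div_nonpos_of_nonpos_of_nonneg hm0 hκ₀.le
    simp only [hC]; linarith
  -- pointwise numerator inequality
  have hnum : ∀ a b : ℝ, 0 ≤ a → 0 ≤ b →
      C * (lam * a ^ q + mu * b ^ q) ≤
        lam * a ^ q + mu * b ^ q + q * κ * a ^ α * b ^ β := by
    intro a b ha hb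
    have hy := young_aux q α β lam mu hα0 hβ0 hαβ hlam hmu a b ha hb
    have hab : 0 ≤ q * a ^ α * b ^ β :=
      mul_nonneg (mul_nonneg hq0.le (Real.rpow_nonneg ha α)) (Real.rpow_nonneg hb β)
    have key : m / κ₀ * (lam * a ^ q + mu * b ^ q) ≤ q * κ * a ^ α * b ^ β := by
      have h1 : m / κ₀ * (lam * a ^ q + mu * b ^ q) ≤
          m / κ₀ * (q * κ₀ * a ^ α * b ^ β) :=
        mul_le_mul_of_nonpos_left hy (div_nonpos_of_nonpos_of_nonneg hm0 hκ₀.le)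
      have h2 : m / κ₀ * (q * κ₀ * a ^ α * b ^ β) = q * m * a ^ α * b ^ β := by
        field_simp
      have h3 : q * m * a ^ α * b ^ β ≤ q * κ * a ^ α * b ^ β := by
        nlinarith [hab, hmκ]
      linarith
    simp only [hC]; nlinarith [key]
  refine ⟨C, hCpos, fun u v hu hv hiu hiv => ?_⟩
  set f : EuclideanSpace ℝ (Fin N) → ℝ :=
    fun x => (lam * |u x| ^ q + mu * |v x| ^ q) / ‖x‖ ^ s with hf
  set g : EuclideanSpace ℝ (Fin N) → ℝ :=
    fun x => (lam * |u x| ^ q + mu * |v x| ^ q + q * κ * |u x| ^ α * |v x| ^ β) / ‖x‖ ^ s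
    with hg
  have hfint : IntegrableOn f Ω := by
    have : f = fun x => lam * (|u x| ^ q / ‖x‖ ^ s) + mu * (|v x| ^ q / ‖x‖ ^ s) := by
      funext x; simp only [hf]; ring
    rw [this]
    exact (hiu.const_mul lam).add (hiv.const_mul mu)
  -- pointwise : C * f ≤ g
  have hpt : ∀ x, C * f x ≤ g x := by
    intro x
    simp only [hf, hg]
    rw [← mul_div_assoc]
    apply div_le_div_nn (hnum _ _ (abs_nonneg _) (abs_nonneg _))
      (Real.rpow_nonneg (norm_nonneg x) s)
  -- integrability of the cross term and of g
  have hcross : IntegrableOn (fun x => q * κ * |u x| ^ α * |v x| ^ β / ‖x‖ ^ s) Ω := by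
    apply Integrable.mono' (((hfint.norm.const_mul (|κ| / κ₀))))
    · apply AEMeasurable.aestronglyMeasurable
      apply AEMeasurable.div _ (by fun_prop)
      apply AEMeasurable.mul _ (by fun_prop : AEMeasurable (fun x => |v x| ^ β) _)
      apply AEMeasurable.mul (by fun_prop) (by fun_prop)
    · filter_upwards with x
      have ha := abs_nonneg (u x); have hb := abs_nonneg (v x)
      have hy := young_aux q α β lam mu hα0 hβ0 hαβ hlam hmu _ _ ha hb
      have hd : (0:ℝ) ≤ ‖x‖ ^ s := Real.rpow_nonneg (norm_nonneg x) s
      have hab : 0 ≤ q * |u x| ^ α * |v x| ^ β :=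
        mul_nonneg (mul_nonneg hq0.le (Real.rpow_nonneg ha α)) (Real.rpow_nonneg hb β)
      have hfx : 0 ≤ f x := by
        apply div_nonneg _ hd
        positivity
      rw [Real.norm_eq_abs, abs_div, abs_of_nonneg hd]
      have h1 : |q * κ * |u x| ^ α * |v x| ^ β| ≤
          |κ| / κ₀ * (lam * |u x| ^ q + mu * |v x| ^ q) := by
        have : |q * κ * |u x| ^ α * |v x| ^ β| = |κ| * (q * |u x| ^ α * |v x| ^ β) := by
          rw [abs_mul, abs_mul, abs_mul, abs_of_nonneg hq0.le,
            abs_of_nonneg (Real.rpow_nonneg ha α), abs_of_nonneg (Real.rpow_nonneg hb β)]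
          ring
        rw [this]
        have h2 : |κ| * (q * |u x| ^ α * |v x| ^ β) =
            |κ| / κ₀ * (q * κ₀ * |u x| ^ α * |v x| ^ β) := by
          field_simp
        rw [h2]
        exact mul_le_mul_of_nonneg_left hy (div_nonneg (abs_nonneg κ) hκ₀.le)
      calc |q * κ * |u x| ^ α * |v x| ^ β| / ‖x‖ ^ s
          ≤ |κ| / κ₀ * (lam * |u x| ^ q + mu * |v x| ^ q) / ‖x‖ ^ s :=
            div_le_div_nn h1 hd
        _ = |κ| / κ₀ * f x := by simp only [hf]; ring
        _ ≤ |κ| / κ₀ * ‖f x‖ := by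
            apply mul_le_mul_of_nonneg_left (le_abs_self _)
              (div_nonneg (abs_nonneg κ) hκ₀.le)
  have hgint : IntegrableOn g Ω := by
    have : g = fun x => f x + q * κ * |u x| ^ α * |v x| ^ β / ‖x‖ ^ s := by
      funext x; simp only [hf, hg]; ring
    rw [this]
    exact hfint.add hcross
  have hmain : C * (∫ x in Ω, f x) ≤ ∫ x in Ω, g x := by
    rw [← integral_const_mul]
    exact integral_mono (hfint.const_mul C) hgint hpt
  refine ⟨hmain, fun hpos => ?_⟩
  calc (0:ℝ) < C * ∫ x in Ω, f x := mul_pos hCpos hpos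
    _ ≤ _ := hmain
end
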